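/- The joint density of data and parameters, P(D,θ|M_k) = Z · ∏_{w,s} p(s|w)^{n(ws)+α(ws)−1}, can be rewritten exactly as Z · 2^{−β_k (D_KL[Q‖P] + h_μ[Q])} · 2^{+|A|^{k+1} (D_KL[U‖P] + h_μ[U])}, where β_k = ∑_{w,s}(n(ws)+α(ws)), P = {p(w), p(s|w)} is the true parameter distribution, Q is given by q(w) = (n(w)+α(w))/β_k and q(s|w) = (n(ws)+α(ws))/(n(w)+α(w)), U is the uniform distribution u(w) = |A|^{-k}, u(s|w) = |A|^{-1}, D_KL[Q‖P] = ∑_{w,s} q(w)q(s|w) log₂(q(s|w)/p(s|w)) and h_μ[Q] = −∑_{w,s} q(w)q(s|w) log₂ q(s|w). -/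

import Mathlib

open Real BigOperators

lemma two_rpow_sum {ι : Type*} (s : Finset ι) (f : ι → ℝ) :
    (2 : ℝ) ^ (∑ i ∈ s, f i) = ∏ i ∈ s, (2 : ℝ) ^ f i := by
  induction s using Finset.cons_induction with
  | empty => simp
  | cons i s hi ih => rw [Finset.sum_cons, Finset.prod_cons, Real.rpow_add two_pos, ih]

lemma two_rpow_mul_logb (c t : ℝ) (ht : 0 < t) :
    (2 : ℝ) ^ (c * Real.logb 2 t) = t ^ c := by
  rw [mul_comm, Real.rpow_mul (by norm_num : (0:ℝ) ≤ 2),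
    Real.rpow_logb two_pos (by norm_num) ht]

/-- The joint density `Z · ∏_{w,s} p(s|w)^{n(ws)+α(ws)-1}` can be rewritten exactly as
`Z · 2^{-β_k (D[Q‖P] + h_μ[Q])} · 2^{+|A|^{k+1} (D[U‖P] + h_μ[U])}`, where
`β_k = ∑_{w,s}(n(ws)+α(ws))`, `q(w) = (n(w)+α(w))/β_k`, `q(s|w) = (n(ws)+α(ws))/(n(w)+α(w))`,
`u(w) = |A|^{-k}`, `u(s|w) = |A|^{-1}`,
`D[Q‖P] = ∑ q(w)q(s|w) log₂(q(s|w)/p(s|w))` and `h_μ[Q] = -∑ q(w)q(s|w) log₂ q(s|w)`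
(similarly for `U`). Alphabet `A = Fin (a+1)`, words `w ∈ A^k`. -/
theorem joint_density_info_form (a k : ℕ) (Z : ℝ)
    (p : (Fin k → Fin (a + 1)) → Fin (a + 1) → ℝ)
    (hp : ∀ w s, 0 < p w s ∧ p w s ≤ 1) (hpsum : ∀ w, ∑ s, p w s = 1)
    (n : (Fin k → Fin (a + 1)) → Fin (a + 1) → ℝ) (hn : ∀ w s, 0 ≤ n w s)
    (α : (Fin k → Fin (a + 1)) → Fin (a + 1) → ℝ) (hα : ∀ w s, 0 < α w s)
    (β : ℝ) (hβ : β = ∑ w, ∑ s, (n w s + α w s))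
    (q : (Fin k → Fin (a + 1)) → ℝ) (hq : ∀ w, q w = ((∑ s, n w s) + ∑ s, α w s) / β)
    (qc : (Fin k → Fin (a + 1)) → Fin (a + 1) → ℝ)
    (hqc : ∀ w s, qc w s = (n w s + α w s) / ((∑ s', n w s') + ∑ s', α w s')) :
    Z * ∏ w, ∏ s, p w s ^ (n w s + α w s - 1)
    = Z * (2 : ℝ) ^ (-(β * ((∑ w, ∑ s, q w * qc w s * Real.logb 2 (qc w s / p w s)) +
          (-(∑ w, ∑ s, q w * qc w s * Real.logb 2 (qc w s)))))) *
        (2 : ℝ) ^ ((((a : ℝ) + 1) ^ (k + 1)) *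
          ((∑ w, ∑ s, ((1 : ℝ) / ((a : ℝ) + 1) ^ k) * ((1 : ℝ) / ((a : ℝ) + 1)) *
              Real.logb 2 (((1 : ℝ) / ((a : ℝ) + 1)) / p w s)) +
            (-(∑ _w : Fin k → Fin (a + 1), ∑ _s : Fin (a + 1),
              ((1 : ℝ) / ((a : ℝ) + 1) ^ k) * ((1 : ℝ) / ((a : ℝ) + 1)) *
              Real.logb 2 ((1 : ℝ) / ((a : ℝ) + 1)))))) := by
  have ha : (0:ℝ) < (a:ℝ) + 1 := by positivity
  have hden : ∀ w, 0 < (∑ s', n w s') + ∑ s', α w s' := by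
    intro w
    have h1 : 0 < ∑ s', α w s' :=
      Finset.sum_pos (fun s _ => hα w s) Finset.univ_nonempty
    have h2 : 0 ≤ ∑ s', n w s' := Finset.sum_nonneg fun s _ => hn w s
    linarith
  have hβpos : 0 < β := by
    rw [hβ]
    exact Finset.sum_pos (fun w _ => Finset.sum_pos
      (fun s _ => by have := hn w s; have := hα w s; linarith) Finset.univ_nonempty)
      Finset.univ_nonempty
  have hqcpos : ∀ w s, 0 < qc w s := by
    intro w s
    rw [hqc]
    exact div_pos (by have := hn w s; have := hα w s; linarith) (hden w)
  have hkey : ∀ w s, β * (q w * qc w s) = n w s + α w s := by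
    intro w s
    rw [hq w, hqc w s]
    field_simp
    exact mul_div_cancel_left₀ _ (hden w).ne'
  -- First exponent
  have hE1 : -(β * ((∑ w, ∑ s, q w * qc w s * Real.logb 2 (qc w s / p w s)) +
      (-(∑ w, ∑ s, q w * qc w s * Real.logb 2 (qc w s)))))
      = ∑ w, ∑ s, (n w s + α w s) * Real.logb 2 (p w s) := by
    have hA : (∑ w, ∑ s, q w * qc w s * Real.logb 2 (qc w s / p w s))
        = (∑ w, ∑ s, q w * qc w s * Real.logb 2 (qc w s))
          - ∑ w, ∑ s, q w * qc w s * Real.logb 2 (p w s) := by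
      rw [← Finset.sum_sub_distrib]
      refine Finset.sum_congr rfl fun w _ => ?_
      rw [← Finset.sum_sub_distrib]
      refine Finset.sum_congr rfl fun s _ => ?_
      rw [Real.logb_div (hqcpos w s).ne' (hp w s).1.ne']
      ring
    rw [hA]
    have : -(β * ((∑ w, ∑ s, q w * qc w s * Real.logb 2 (qc w s)) -
        (∑ w, ∑ s, q w * qc w s * Real.logb 2 (p w s)) +
        -(∑ w, ∑ s, q w * qc w s * Real.logb 2 (qc w s))))
        = β * ∑ w, ∑ s, q w * qc w s * Real.logb 2 (p w s) := by ring
    rw [this, Finset.mul_sum]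
    refine Finset.sum_congr rfl fun w _ => ?_
    rw [Finset.mul_sum]
    refine Finset.sum_congr rfl fun s _ => ?_
    have h := hkey w s
    calc β * (q w * qc w s * Real.logb 2 (p w s))
        = (β * (q w * qc w s)) * Real.logb 2 (p w s) := by ring
      _ = (n w s + α w s) * Real.logb 2 (p w s) := by rw [h]
  -- Second exponent
  have hN : (((a : ℝ) + 1) ^ (k + 1)) * (((1 : ℝ) / ((a : ℝ) + 1) ^ k) *
      ((1 : ℝ) / ((a : ℝ) + 1))) = 1 := by
    field_simp
    ring
  have hE2 : ((((a : ℝ) + 1) ^ (k + 1)) *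
      ((∑ w, ∑ s, ((1 : ℝ) / ((a : ℝ) + 1) ^ k) * ((1 : ℝ) / ((a : ℝ) + 1)) *
          Real.logb 2 (((1 : ℝ) / ((a : ℝ) + 1)) / p w s)) +
        (-(∑ _w : Fin k → Fin (a + 1), ∑ _s : Fin (a + 1),
          ((1 : ℝ) / ((a : ℝ) + 1) ^ k) * ((1 : ℝ) / ((a : ℝ) + 1)) *
          Real.logb 2 ((1 : ℝ) / ((a : ℝ) + 1))))))
      = ∑ w, ∑ s, (-1 : ℝ) * Real.logb 2 (p w s) := by
    have hA : (∑ w, ∑ s, ((1 : ℝ) / ((a : ℝ) + 1) ^ k) * ((1 : ℝ) / ((a : ℝ) + 1)) *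
          Real.logb 2 (((1 : ℝ) / ((a : ℝ) + 1)) / p w s))
        = (∑ _w : Fin k → Fin (a + 1), ∑ _s : Fin (a + 1),
            ((1 : ℝ) / ((a : ℝ) + 1) ^ k) * ((1 : ℝ) / ((a : ℝ) + 1)) *
            Real.logb 2 ((1 : ℝ) / ((a : ℝ) + 1)))
          - ∑ w, ∑ s, ((1 : ℝ) / ((a : ℝ) + 1) ^ k) * ((1 : ℝ) / ((a : ℝ) + 1)) *
            Real.logb 2 (p w s) := by
      rw [← Finset.sum_sub_distrib]
      refine Finset.sum_congr rfl fun w _ => ?_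
      rw [← Finset.sum_sub_distrib]
      refine Finset.sum_congr rfl fun s _ => ?_
      rw [Real.logb_div (by positivity) (hp w s).1.ne']
      ring
    rw [hA]
    have hrw : ∀ (X Y : ℝ), (((a : ℝ) + 1) ^ (k + 1)) * (X - Y + -X)
        = -((((a : ℝ) + 1) ^ (k + 1)) * Y) := by intro X Y; ring
    rw [hrw, Finset.mul_sum, ← Finset.sum_neg_distrib]
    refine Finset.sum_congr rfl fun w _ => ?_
    rw [Finset.mul_sum, ← Finset.sum_neg_distrib]
    refine Finset.sum_congr rfl fun s _ => ?_
    calc -((((a : ℝ) + 1) ^ (k + 1)) * (((1 : ℝ) / ((a : ℝ) + 1) ^ k) *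
          ((1 : ℝ) / ((a : ℝ) + 1)) * Real.logb 2 (p w s)))
        = -((((a : ℝ) + 1) ^ (k + 1)) * (((1 : ℝ) / ((a : ℝ) + 1) ^ k) *
          ((1 : ℝ) / ((a : ℝ) + 1)))) * Real.logb 2 (p w s) := by ring
      _ = (-1 : ℝ) * Real.logb 2 (p w s) := by rw [hN]
  rw [hE1, hE2]
  rw [two_rpow_sum, two_rpow_sum]
  have h1 : (∏ w, (2:ℝ) ^ (∑ s, (n w s + α w s) * Real.logb 2 (p w s)))
      = ∏ w, ∏ s, p w s ^ (n w s + α w s) := by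
    refine Finset.prod_congr rfl fun w _ => ?_
    rw [two_rpow_sum]
    exact Finset.prod_congr rfl fun s _ => two_rpow_mul_logb _ _ (hp w s).1
  have h2 : (∏ w, (2:ℝ) ^ (∑ s, (-1:ℝ) * Real.logb 2 (p w s)))
      = ∏ w, ∏ s, p w s ^ (-1 : ℝ) := by
    refine Finset.prod_congr rfl fun w _ => ?_
    rw [two_rpow_sum]
    exact Finset.prod_congr rfl fun s _ => two_rpow_mul_logb _ _ (hp w s).1
  rw [h1, h2, mul_assoc, ← Finset.prod_mul_distrib]
  congr 1
  refine Finset.prod_congr rfl fun w _ => ?_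
  rw [← Finset.prod_mul_distrib]
  refine Finset.prod_congr rfl fun s _ => ?_
  rw [show n w s + α w s - 1 = (n w s + α w s) + (-1) by ring,
    Real.rpow_add (hp w s).1]
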